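/- Let V be a word consisting of u North steps and d South steps, and let H be a word consisting of r East steps and l West steps. For every integer k, the number of shuffles (interleavings) of V and H whose signed peak-count equals k is C(r+u, u−k) · C(l+d, d+k), where C(a,b) denotes the binomial coefficient, taken to be 0 unless 0 ≤ b ≤ a. -/

import Mathlib

/-!
Read a shuffle from the left: its signed peak-count only changes where an `N` is directly
followed by a `W` (`+1`) or an `E` by an `S` (`-1`). So we count shuffles `σ` together with the
letter `a` placed in front of them, i.e. by `signedPeak (a :: σ)`. This refined count still has
a product-of-binomials closed form: a leading `N` facing a `W` at the head of `H` acts as one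
`S` of `V` turned into an `N`, and a leading `E` facing an `S` at the head of `V` as one `W` of
`H` turned into an `E`. Splitting the shuffles by their first letter, every case of the
induction becomes a single Pascal step in one of the two binomial factors. A leading `S` changes
nothing, which gives the theorem.
-/

inductive Step : Type
  | E | W | N | S
deriving DecidableEq, Repr

open Step

def isVert : Step → Bool
  | N => true
  | S => true
  | _ => false

def isHoriz : Step → Bool
  | E => true
  | W => true
  | _ => false

def IsShuffle (V H σ : List Step) : Prop :=
  σ.filter isVert = V ∧ σ.filter isHoriz = H

def pairs (σ : List Step) : List (Step × Step) := σ.zip σ.tail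

def signedPeak (σ : List Step) : ℤ :=
  (((pairs σ).filter (fun p => decide (p.1 = N ∧ p.2 = W))).length : ℤ)
  - (((pairs σ).filter (fun p => decide (p.1 = E ∧ p.2 = S))).length : ℤ)

def peakCount (σ : List Step) : ℕ :=
  ((pairs σ).filter (fun p => decide (p.1 = N ∧ p.2 = W))).length
  + ((pairs σ).filter (fun p => decide (p.1 = E ∧ p.2 = S))).length

def zch (a b : ℤ) : ℕ := if 0 ≤ b ∧ b ≤ a then a.toNat.choose b.toNat else 0

namespace List

variable {α : Type*}

def shuffles : List α → List α → List (List α)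
  | [], H => [H]
  | v :: V, [] => [v :: V]
  | v :: V, h :: H =>
    (shuffles V (h :: H)).map (v :: ·) ++ (shuffles (v :: V) H).map (h :: ·)

@[simp]
theorem shuffles_nil_left (H : List α) : shuffles [] H = [H] := by
  rw [shuffles]

@[simp]
theorem shuffles_nil_right (V : List α) : shuffles V [] = [V] := by
  cases V <;> rw [shuffles]

theorem shuffles_cons_cons (v h : α) (V H : List α) :
    shuffles (v :: V) (h :: H) =
      (shuffles V (h :: H)).map (v :: ·) ++ (shuffles (v :: V) H).map (h :: ·) := by
  rw [shuffles]

variable {p : α → Bool}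

theorem mem_shuffles_iff {V H σ : List α} (hV : ∀ a ∈ V, p a)
    (hH : ∀ a ∈ H, p a = false) : σ ∈ shuffles V H ↔ σ.filter p = V ∧ σ.filter (!p ·) = H := by
  induction V, H using shuffles.induct generalizing σ with
  | case1 H =>
    simp only [shuffles_nil_left, mem_singleton]
    constructor
    · rintro rfl
      exact ⟨filter_eq_nil_iff.2 fun a ha => by simp [hH a ha],
        filter_eq_self.2 fun a ha => by simp [hH a ha]⟩
    · rintro ⟨h₁, rfl⟩
      exact (filter_eq_self.2 fun a ha => by simpa using filter_eq_nil_iff.1 h₁ a ha).symm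
  | case2 v V =>
    simp only [shuffles_nil_right, mem_singleton]
    constructor
    · rintro rfl
      exact ⟨filter_eq_self.2 hV, filter_eq_nil_iff.2 fun a ha => by simpa using hV a ha⟩
    · rintro ⟨h₁, h₂⟩
      rw [← h₁]
      exact (filter_eq_self.2 fun a ha => by simpa using filter_eq_nil_iff.1 h₂ a ha).symm
  | case3 v V h H ih₁ ih₂ =>
    have hv : p v := hV v mem_cons_self
    have hh := hH h mem_cons_self
    rw [shuffles_cons_cons]
    rcases σ with _ | ⟨a, τ⟩
    · simp
    by_cases ha : p a
    · have hha : h ≠ a := by rintro rfl; simp_all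
      simp [ha, hha, ih₁ (fun b hb => hV b (mem_cons_of_mem _ hb)) hH, eq_comm, and_assoc,
        and_comm]
    · have hva : v ≠ a := by rintro rfl; simp_all
      simp [ha, hva, ih₂ hV (fun b hb => hH b (mem_cons_of_mem _ hb)), eq_comm, and_assoc,
        and_comm, and_left_comm]

theorem nodup_shuffles {V H : List α} (hV : ∀ a ∈ V, p a) (hH : ∀ a ∈ H, p a = false) :
    (shuffles V H).Nodup := by
  induction V, H using shuffles.induct with
  | case1 H => simp
  | case2 v V => simp
  | case3 v V h H ih₁ ih₂ =>
    have hvh : v ≠ h := by rintro rfl; simp [hV v mem_cons_self] at hH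
    rw [shuffles_cons_cons]
    refine Nodup.append ?_ ?_ ?_
    · exact (ih₁ (fun b hb => hV b (mem_cons_of_mem _ hb)) hH).map cons_injective
    · exact (ih₂ hV (fun b hb => hH b (mem_cons_of_mem _ hb))).map cons_injective
    · intro σ hσ₁ hσ₂
      obtain ⟨τ, -, rfl⟩ := mem_map.1 hσ₁
      obtain ⟨τ', -, h'⟩ := mem_map.1 hσ₂
      exact hvh (cons_eq_cons.1 h').1.symm

end List

theorem isHoriz_eq_not_isVert : isHoriz = fun s => !isVert s := by
  funext s
  cases s <;> rfl

theorem isVert_eq_false_of_isHoriz {s : Step} (h : isHoriz s) : isVert s = false := by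
  cases s <;> simp_all [isVert, isHoriz]

theorem isShuffle_iff_mem_shuffles {V H σ : List Step} (hV : ∀ s ∈ V, isVert s)
    (hH : ∀ s ∈ H, isHoriz s) : IsShuffle V H σ ↔ σ ∈ V.shuffles H := by
  rw [IsShuffle, isHoriz_eq_not_isVert,
    List.mem_shuffles_iff hV fun s hs => isVert_eq_false_of_isHoriz (hH s hs)]

def peakWeight : Step → Step → ℤ
  | N, W => 1
  | E, S => -1
  | _, _ => 0

theorem peakWeight_eq_zero {a b : Step} (h : isVert a = isVert b) : peakWeight a b = 0 := by
  cases a <;> cases b <;> first | rfl | simp [isVert] at h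

def headWeight (a : Step) : List Step → ℤ
  | [] => 0
  | b :: _ => peakWeight a b

@[simp]
theorem headWeight_nil (a : Step) : headWeight a [] = 0 := rfl

theorem signedPeak_cons (a : Step) (σ : List Step) :
    signedPeak (a :: σ) = headWeight a σ + signedPeak σ := by
  rcases σ with _ | ⟨b, σ⟩
  · simp [signedPeak, pairs, headWeight]
  · have hpairs : pairs (a :: b :: σ) = (a, b) :: pairs (b :: σ) := rfl
    simp only [signedPeak, hpairs, List.filter_cons, headWeight]
    cases a <;> cases b <;> simp [peakWeight] <;> ring

theorem headWeight_eq_zero {a : Step} {σ : List Step} (hσ : ∀ s ∈ σ, isVert s = isVert a) :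
    headWeight a σ = 0 := by
  rcases σ with _ | ⟨b, σ⟩
  · rfl
  · exact peakWeight_eq_zero (hσ b List.mem_cons_self).symm

theorem signedPeak_eq_zero {c : Bool} {σ : List Step} (hσ : ∀ s ∈ σ, isVert s = c) :
    signedPeak σ = 0 := by
  induction σ with
  | nil => rfl
  | cons a σ ih =>
    have hσ' : ∀ s ∈ σ, isVert s = c := fun s hs => hσ s (List.mem_cons_of_mem _ hs)
    rw [signedPeak_cons, ih hσ', headWeight_eq_zero fun s hs => by
      rw [hσ' s hs, hσ a List.mem_cons_self], add_zero]

def shuffleCount (a : Step) (V H : List Step) (k : ℤ) : ℕ :=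
  (V.shuffles H).countP fun σ => signedPeak (a :: σ) = k

theorem shuffleCount_cons_cons (a v h : Step) (V H : List Step) (k : ℤ) :
    shuffleCount a (v :: V) (h :: H) k =
      shuffleCount v V (h :: H) (k - peakWeight a v) +
        shuffleCount h (v :: V) H (k - peakWeight a h) := by
  simp only [shuffleCount, List.shuffles_cons_cons, List.countP_append, List.countP_map]
  congr 1 <;> refine List.countP_congr fun σ _ => ?_ <;>
    simp [signedPeak_cons a, headWeight, eq_sub_iff_add_eq, add_comm]

theorem shuffleCount_of_signedPeak_eq_zero (a : Step) {σ : List Step} (hσ : signedPeak σ = 0)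
    {V H : List Step} (hVH : V.shuffles H = [σ]) (k : ℤ) :
    shuffleCount a V H k = if k = headWeight a σ then 1 else 0 := by
  simp [shuffleCount, hVH, signedPeak_cons, hσ, List.countP_cons, eq_comm]

theorem zch_natCast (n j : ℕ) : zch n j = n.choose j := by
  by_cases h : j ≤ n
  · simp [zch, h]
  · simp [zch, Nat.choose_eq_zero_of_lt (not_le.1 h), h]

theorem zch_add_one {a : ℤ} (ha : 0 ≤ a) (b : ℤ) :
    zch (a + 1) b = zch a b + zch a (b - 1) := by
  lift a to ℕ using ha
  rcases lt_or_ge b 0 with hb | hb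
  · simp only [zch]
    rw [if_neg (by omega), if_neg (by omega), if_neg (by omega)]
  lift b to ℕ using hb
  rcases b with _ | b
  · simp [zch, add_nonneg]
  · rw [show ((b + 1 : ℕ) : ℤ) - 1 = b by push_cast; ring, ← Nat.cast_succ, zch_natCast,
      zch_natCast, zch_natCast, Nat.choose_succ_succ', add_comm]

def peakFormula (u d r l k : ℤ) : ℕ := zch (r + u) (u - k) * zch (l + d) (d + k)

theorem peakFormula_pascal_north_east {u d r l : ℤ} (h : 0 ≤ r + u - 1) (k : ℤ) :
    peakFormula u d r l k = peakFormula (u - 1) d r l k + peakFormula u d (r - 1) l k := by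
  have := zch_add_one h (u - k)
  simp only [sub_add_cancel] at this
  simp only [peakFormula, this]
  ring_nf

theorem peakFormula_pascal_south_west {u d r l : ℤ} (h : 0 ≤ l + d - 1) (k : ℤ) :
    peakFormula u d r l k = peakFormula u (d - 1) r l k + peakFormula u d r (l - 1) k := by
  have := zch_add_one h (d + k)
  simp only [sub_add_cancel] at this
  simp only [peakFormula, this]
  ring_nf

theorem peakFormula_self_neg {a r l : ℤ} (hr : 0 ≤ r + a) (hl : 0 ≤ l - a) (k : ℤ) :
    peakFormula a (-a) r l k = if k = a then 1 else 0 := by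
  unfold peakFormula zch
  split_ifs <;> first | omega | simp_all

theorem peakFormula_neg_self {b u d : ℤ} (hu : 0 ≤ u - b) (hd : 0 ≤ d + b) (k : ℤ) :
    peakFormula u d (-b) b k = if k = b then 1 else 0 := by
  rw [peakFormula, neg_add_eq_sub, add_comm b d]
  unfold zch
  split_ifs <;> first | omega | simp_all

theorem headWeight_mem_Icc_of_isHoriz (a : Step) {H : List Step} (hH : ∀ s ∈ H, isHoriz s) :
    headWeight a H ∈ Set.Icc 0 (H.count W : ℤ) := by
  rcases H with _ | ⟨h, H⟩
  · simp [headWeight]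
  · have hh := hH h List.mem_cons_self
    cases a <;> cases h <;> simp_all [headWeight, peakWeight, isHoriz] <;> omega

theorem headWeight_mem_Icc_of_isVert (a : Step) {V : List Step} (hV : ∀ s ∈ V, isVert s) :
    headWeight a V ∈ Set.Icc (-(V.count S : ℤ)) 0 := by
  rcases V with _ | ⟨v, V⟩
  · simp [headWeight]
  · have hv := hV v List.mem_cons_self
    cases a <;> cases v <;> simp_all [headWeight, peakWeight, isVert]

theorem shuffleCount_eq_peakFormula (a : Step) {V H : List Step} (hV : ∀ s ∈ V, isVert s)
    (hH : ∀ s ∈ H, isHoriz s) (k : ℤ) :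
    shuffleCount a V H k =
      peakFormula (V.count N + headWeight a H) (V.count S - headWeight a H)
        (H.count E - headWeight a V) (H.count W + headWeight a V) k := by
  induction V, H using List.shuffles.induct generalizing a k with
  | case1 H =>
    obtain ⟨h₁, h₂⟩ := headWeight_mem_Icc_of_isHoriz a hH
    rw [shuffleCount_of_signedPeak_eq_zero a (signedPeak_eq_zero fun s hs =>
      isVert_eq_false_of_isHoriz (hH s hs)) (List.shuffles_nil_left H)]
    simp only [List.count_nil, headWeight_nil, Nat.cast_zero, zero_add, zero_sub, sub_zero,
      add_zero]
    rw [peakFormula_self_neg (by omega) (by omega)]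
  | case2 v V =>
    obtain ⟨h₁, h₂⟩ := headWeight_mem_Icc_of_isVert a hV
    rw [shuffleCount_of_signedPeak_eq_zero a (signedPeak_eq_zero hV) (List.shuffles_nil_right _)]
    simp only [List.count_nil, headWeight_nil, Nat.cast_zero, zero_add, zero_sub, sub_zero,
      add_zero]
    rw [peakFormula_neg_self (by omega) (by omega)]
  | case3 v V h H ih₁ ih₂ =>
    have hv := hV v List.mem_cons_self
    have hh := hH h List.mem_cons_self
    have hV' : ∀ s ∈ V, isVert s := fun s hs => hV s (List.mem_cons_of_mem _ hs)
    have hH' : ∀ s ∈ H, isHoriz s := fun s hs => hH s (List.mem_cons_of_mem _ hs)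
    have hvV : headWeight v V = 0 := headWeight_eq_zero fun s hs => by rw [hV' s hs, hv]
    have hhH : headWeight h H = 0 := headWeight_eq_zero fun s hs => by
      rw [isVert_eq_false_of_isHoriz (hH' s hs), isVert_eq_false_of_isHoriz hh]
    rw [shuffleCount_cons_cons, ih₁ v hV' hH, ih₂ h hV hH', hvV, hhH]
    simp only [headWeight]
    cases a <;> cases v <;> cases h <;> simp [isVert, isHoriz, peakWeight] at hv hh ⊢
    all_goals
      first
      | rw [eq_comm, peakFormula_pascal_north_east]
        · unfold peakFormula; ring_nf
        · omega
      | rw [eq_comm, peakFormula_pascal_south_west]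
        · unfold peakFormula; ring_nf
        · omega

theorem headWeight_S (σ : List Step) : headWeight S σ = 0 := by
  rcases σ with _ | ⟨b, σ⟩
  · rfl
  · cases b <;> rfl

theorem ncard_setOf_isShuffle {V H : List Step} (hV : ∀ s ∈ V, isVert s)
    (hH : ∀ s ∈ H, isHoriz s) (P : List Step → Prop) [DecidablePred P] :
    {σ | IsShuffle V H σ ∧ P σ}.ncard = (V.shuffles H).countP (P ·) := by
  have hset : {σ | IsShuffle V H σ ∧ P σ} = ((V.shuffles H).filter (P ·)).toFinset := by
    ext σ
    simp [isShuffle_iff_mem_shuffles hV hH]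
  have hnodup := List.nodup_shuffles hV fun s hs => isVert_eq_false_of_isHoriz (hH s hs)
  rw [hset, Set.ncard_coe_finset, List.toFinset_card_of_nodup (hnodup.filter _),
    List.countP_eq_length_filter]

/-- **Theorem (signed peak-count enumeration).**
If `V` consists of `u` North steps and `d` South steps, and `H` consists of `r` East steps
and `l` West steps, then for every integer `k` the number of shuffles of `V` and `H`
with signed peak-count `k` is `C(r+u, u−k) · C(l+d, d+k)`. -/
theorem signedPeak_enumeration (u d r l : ℕ) (V H : List Step)
    (hV : ∀ s ∈ V, isVert s = true)
    (hVu : V.count Step.N = u) (hVd : V.count Step.S = d)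
    (hH : ∀ s ∈ H, isHoriz s = true)
    (hHr : H.count Step.E = r) (hHl : H.count Step.W = l)
    (k : ℤ) :
    {σ : List Step | IsShuffle V H σ ∧ signedPeak σ = k}.ncard
      = zch ((r : ℤ) + u) ((u : ℤ) - k) * zch ((l : ℤ) + d) ((d : ℤ) + k) := by
  subst hVu hVd hHr hHl
  calc {σ | IsShuffle V H σ ∧ signedPeak σ = k}.ncard
      = shuffleCount S V H k := by
        simp [ncard_setOf_isShuffle hV hH, shuffleCount, signedPeak_cons, headWeight_S]
    _ = _ := by
        simp [shuffleCount_eq_peakFormula S hV hH, headWeight_S, peakFormula]
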